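/- arXiv:0807.3675 — 3 statements merged into one kernel-verified Lean document; each statement's English description precedes it below -/
import Mathlib

section
/- For every $0 \le p \le 1/2$ and every real $t$, the moment generating function of $X_p$ satisfies $\mathbb{E}[e^{t X_p}] \le e^{(1-p)^2 t^2/2}$. -/
/-!
Hoeffding's lemma: `X_p` is centred and takes values in `[p - 1, p]`, an interval of length `1`,
so its moment generating function is at most `e^{t²/8}`. Since `1 - p ≥ 1/2`, this is at most
`e^{(1-p)² t²/2}`.
-/

open MeasureTheory ProbabilityTheory Real

noncomputable def twoPointMeasure {α : Type*} [MeasurableSpace α] (w : ℝ) (a b : α) :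
    Measure α :=
  ENNReal.ofReal w • Measure.dirac a + ENNReal.ofReal (1 - w) • Measure.dirac b

section TwoPointMeasure

variable {α : Type*} [MeasurableSpace α] {w : ℝ}

lemma isProbabilityMeasure_twoPointMeasure (hw0 : 0 ≤ w) (hw1 : w ≤ 1) (a b : α) :
    IsProbabilityMeasure (twoPointMeasure w a b) := by
  constructor
  simp [twoPointMeasure, ← ENNReal.ofReal_add hw0 (sub_nonneg.2 hw1)]

variable [MeasurableSingletonClass α]

lemma ae_twoPointMeasure {a b : α} {P : α → Prop} (ha : P a) (hb : P b) :
    ∀ᵐ x ∂twoPointMeasure w a b, P x :=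
  ae_add_measure_iff.2
    ⟨Measure.ae_smul_measure (by rwa [ae_dirac_eq, Filter.eventually_pure]) _,
      Measure.ae_smul_measure (by rwa [ae_dirac_eq, Filter.eventually_pure]) _⟩

lemma integral_twoPointMeasure {E : Type*} [NormedAddCommGroup E] [NormedSpace ℝ E]
    [CompleteSpace E] (hw0 : 0 ≤ w) (hw1 : w ≤ 1) (a b : α) (f : α → E) :
    ∫ x, f x ∂twoPointMeasure w a b = w • f a + (1 - w) • f b := by
  rw [twoPointMeasure, integral_add_measure, integral_smul_measure, integral_smul_measure,
    integral_dirac, integral_dirac, ENNReal.toReal_ofReal hw0,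
    ENNReal.toReal_ofReal (sub_nonneg.2 hw1)]
  all_goals exact (integrable_dirac (by simp)).smul_measure ENNReal.ofReal_ne_top

end TwoPointMeasure

theorem two_point_mgf_le_exp_sq_div_eight {p : ℝ} (hp0 : 0 ≤ p) (hp1 : p ≤ 1) (t : ℝ) :
    p * exp (-t * (1 - p)) + (1 - p) * exp (t * p) ≤ exp (t ^ 2 / 8) := by
  have := isProbabilityMeasure_twoPointMeasure hp0 hp1 (p - 1) p
  have hcentered : (twoPointMeasure p (p - 1) p)[id] = 0 := by
    rw [integral_twoPointMeasure hp0 hp1]; simp only [id, smul_eq_mul]; ring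
  have hoeffding := (hasSubgaussianMGF_of_mem_Icc_of_integral_eq_zero aemeasurable_id
    (ae_twoPointMeasure (P := (· ∈ Set.Icc (p - 1) p)) (by simp) (by simp)) hcentered).mgf_le t
  calc p * exp (-t * (1 - p)) + (1 - p) * exp (t * p)
      = mgf id (twoPointMeasure p (p - 1) p) t := by
        rw [mgf, integral_twoPointMeasure hp0 hp1]; simp only [id, smul_eq_mul]; ring_nf
    _ ≤ exp ((‖p - (p - 1)‖₊ / 2) ^ 2 * t ^ 2 / 2) := hoeffding
    _ = exp (t ^ 2 / 8) := by norm_num; ring_nf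

/-- For `0 ≤ p ≤ 1/2` and every real `t`, the moment generating function of `X_p`,
namely `E[e^{tX_p}] = p e^{-t(1-p)} + (1-p) e^{tp}`, is at most `e^{(1-p)^2 t^2/2}`. -/
theorem stmt_1 (p t : ℝ) (hp0 : 0 ≤ p) (hp : p ≤ 1 / 2) :
    p * Real.exp (-t * (1 - p)) + (1 - p) * Real.exp (t * p) ≤
      Real.exp ((1 - p) ^ 2 * t ^ 2 / 2) := by
  refine (two_point_mgf_le_exp_sq_div_eight hp0 (by linarith) t).trans (exp_le_exp.2 ?_)
  have hq : 1 / 4 ≤ (1 - p) ^ 2 := by nlinarith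
  nlinarith [sq_nonneg t]
end

section
/- For every $1/2 < p \le 1$ and every real $t$, $\mathbb{E}[e^{t X_p}] \le e^{p^2 t^2/2}$. -/
/-!
Write `-t(1-p)` as the convex combination `(1/(2p))·(-tp) + (1 - 1/(2p))·(tp)`, valid since
`p > 1/2`. Convexity of `exp` then bounds `p e^{-t(1-p)}` by `e^{-tp}/2 + (p - 1/2) e^{tp}`, so the
moment generating function is at most `cosh (tp) ≤ e^{(tp)^2/2}`.
-/

open Real

lemma mul_exp_neg_mul_one_sub_le {p : ℝ} (hp : 1 / 2 < p) (t : ℝ) :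
    p * exp (-t * (1 - p)) ≤ exp (-(t * p)) / 2 + (p - 1 / 2) * exp (t * p) := by
  have hp0 : 0 < p := by linarith
  have hw₁ : 0 ≤ 1 / (2 * p) := by positivity
  have hw₂ : 0 ≤ 1 - 1 / (2 * p) := by
    rw [sub_nonneg, div_le_one (by linarith)]
    linarith
  have hconv := convexOn_exp.2 (Set.mem_univ (-(t * p))) (Set.mem_univ (t * p)) hw₁ hw₂
    (by ring)
  have hcomb : (1 / (2 * p)) • -(t * p) + (1 - 1 / (2 * p)) • (t * p) = -t * (1 - p) := by
    simp only [smul_eq_mul]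
    field_simp
    ring
  rw [hcomb, smul_eq_mul, smul_eq_mul] at hconv
  calc p * exp (-t * (1 - p))
      ≤ p * (1 / (2 * p) * exp (-(t * p)) + (1 - 1 / (2 * p)) * exp (t * p)) :=
        mul_le_mul_of_nonneg_left hconv hp0.le
    _ = exp (-(t * p)) / 2 + (p - 1 / 2) * exp (t * p) := by field_simp

lemma mul_exp_add_one_sub_mul_exp_le_cosh {p : ℝ} (hp : 1 / 2 < p) (t : ℝ) :
    p * exp (-t * (1 - p)) + (1 - p) * exp (t * p) ≤ cosh (t * p) := by
  rw [cosh_eq]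
  linarith [mul_exp_neg_mul_one_sub_le hp t]

theorem stmt_2_general (p t : ℝ) (hp0 : 1 / 2 < p) :
    p * Real.exp (-t * (1 - p)) + (1 - p) * Real.exp (t * p) ≤
      Real.exp (p ^ 2 * t ^ 2 / 2) :=
  calc p * exp (-t * (1 - p)) + (1 - p) * exp (t * p)
      ≤ cosh (t * p) := mul_exp_add_one_sub_mul_exp_le_cosh hp0 t
    _ ≤ exp ((t * p) ^ 2 / 2) := cosh_le_exp_half_sq _
    _ = exp (p ^ 2 * t ^ 2 / 2) := by ring_nf

/-- For `1/2 < p ≤ 1` and every real `t`, the moment generating function of `X_p`,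
namely `E[e^{tX_p}] = p e^{-t(1-p)} + (1-p) e^{tp}`, is at most `e^{p^2 t^2/2}`. -/
theorem stmt_2 (p t : ℝ) (hp0 : 1 / 2 < p) (hp : p ≤ 1) :
    p * Real.exp (-t * (1 - p)) + (1 - p) * Real.exp (t * p) ≤
      Real.exp (p ^ 2 * t ^ 2 / 2) :=
  stmt_2_general p t hp0
end

section
/- For every $0 \le p \le 1$ and every real $t$, $\mathbb{E}[e^{tX_p}] \le e^{q^2 t^2/2}$, where $q = \max\{p, 1-p\}$. -/
/-!
`X_p` is centred and `|X_p| ≤ q`. On `[-q, q]` the convex function `y ↦ exp (t y)` lies below its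
chord `cosh (t q) + (y / q) sinh (t q)`, whose mean vanishes against a centred distribution, so the
moment generating function is at most `cosh (t q) ≤ exp ((t q) ^ 2 / 2)`.
-/

open Real Finset

lemma Real.exp_mul_le_cosh_add_sinh {q y : ℝ} (t : ℝ) (hq : 0 < q) (hy : |y| ≤ q) :
    exp (t * y) ≤ cosh (t * q) + y / q * sinh (t * q) := by
  obtain ⟨hyl, hyr⟩ := abs_le.1 hy
  have hchord := convexOn_exp.2 (Set.mem_univ (-(t * q))) (Set.mem_univ (t * q))
    (div_nonneg (by linarith) (by linarith) : 0 ≤ (q - y) / (2 * q))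
    (div_nonneg (by linarith) (by linarith) : 0 ≤ (q + y) / (2 * q))
    (by field_simp; ring)
  have hpoint : (q - y) / (2 * q) * -(t * q) + (q + y) / (2 * q) * (t * q) = t * y := by
    field_simp; ring
  have hvalue : (q - y) / (2 * q) * exp (-(t * q)) + (q + y) / (2 * q) * exp (t * q)
      = cosh (t * q) + y / q * sinh (t * q) := by
    rw [cosh_eq, sinh_eq]; field_simp; ring
  rwa [smul_eq_mul, smul_eq_mul, smul_eq_mul, smul_eq_mul, hpoint, hvalue] at hchord

lemma Real.sum_mul_exp_mul_le_cosh {ι : Type*} {s : Finset ι} {w y : ι → ℝ} {q : ℝ} (t : ℝ)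
    (hq : 0 < q) (hw : ∀ i ∈ s, 0 ≤ w i) (hw1 : ∑ i ∈ s, w i = 1)
    (hmean : ∑ i ∈ s, w i * y i = 0) (hy : ∀ i ∈ s, |y i| ≤ q) :
    ∑ i ∈ s, w i * exp (t * y i) ≤ cosh (t * q) :=
  calc ∑ i ∈ s, w i * exp (t * y i)
      ≤ ∑ i ∈ s, w i * (cosh (t * q) + y i / q * sinh (t * q)) :=
        sum_le_sum fun i hi ↦
          mul_le_mul_of_nonneg_left (exp_mul_le_cosh_add_sinh t hq (hy i hi)) (hw i hi)
    _ = cosh (t * q) * ∑ i ∈ s, w i + sinh (t * q) / q * ∑ i ∈ s, w i * y i := by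
        simp only [mul_sum, ← sum_add_distrib]
        congr 1 with i
        ring
    _ = cosh (t * q) := by rw [hw1, hmean]; ring

/-- For `0 ≤ p ≤ 1` and every real `t`, with `q = max {p, 1-p}`, the moment generating
function of `X_p`, namely `E[e^{tX_p}] = p e^{-t(1-p)} + (1-p) e^{tp}`, is at most
`e^{q^2 t^2/2}`. -/
theorem stmt_3 (p t : ℝ) (hp0 : 0 ≤ p) (hp : p ≤ 1) :
    p * Real.exp (-t * (1 - p)) + (1 - p) * Real.exp (t * p) ≤
      Real.exp ((max p (1 - p)) ^ 2 * t ^ 2 / 2) := by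
  set q := max p (1 - p)
  have hpq : p ≤ q := le_max_left _ _
  have hpq' : 1 - p ≤ q := le_max_right _ _
  clear_value q
  have hmgf := sum_mul_exp_mul_le_cosh (s := univ) (w := ![p, 1 - p]) (y := ![p - 1, p]) t
    (by linarith) (fun i _ ↦ by fin_cases i <;> simp [hp0, hp]) (by simp)
    (by simp only [Fin.sum_univ_two, Matrix.cons_val_zero, Matrix.cons_val_one]; ring)
    (fun i _ ↦ by fin_cases i <;> exact abs_le.2 ⟨by simp; linarith, by simp; linarith⟩)
  calc p * exp (-t * (1 - p)) + (1 - p) * exp (t * p)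
      = ∑ i, ![p, 1 - p] i * exp (t * ![p - 1, p] i) := by
        simp only [Fin.sum_univ_two, Matrix.cons_val_zero, Matrix.cons_val_one]; ring_nf
    _ ≤ cosh (t * q) := hmgf
    _ ≤ exp ((t * q) ^ 2 / 2) := cosh_le_exp_half_sq _
    _ = exp (q ^ 2 * t ^ 2 / 2) := by ring_nf
end
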